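/- There exist constants c₁, c₂ > 0 such that for all large N, c₁ N/log N ≤ #{n ≤ N : n is prime} and ∫₀¹ |∑_{p ≤ N, p prime} r_p(t)| dt ≤ c₂ (N/log N)^{1/2}. Consequently, if σ > 0 and c > 0 satisfy #{primes ≤ N} ≤ c N^σ ∫₀¹ |∑_{p ≤ N} r_p(t)| dt for all N, then σ ≥ 1/2. -/

import Mathlib

open MeasureTheory Filter Finset

/-- The `n`-th Rademacher function on `[0,1]`. -/
noncomputable def rad (n : ℕ) (t : ℝ) : ℝ :=
  if Int.fract ((2 ^ n : ℝ) * t) < 1 / 2 then 1 else -1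

/-!
For `m < n` the product `r_m r_n` changes sign under the shift `t ↦ t + 2^{-(m+1)}` (which turns
`r_m` into `-r_m` and leaves `r_n` unchanged), so its integral over `[0,1]`, a union of periods,
vanishes. Thus the Rademacher functions are orthonormal on `[0,1]`, `∫ (∑_{p ∈ S} r_p)² = #S`, and
by Cauchy–Schwarz `∫ |∑_{p ∈ S} r_p| ≤ √#S`. Together with Chebyshev's bounds `π(N) ≍ N / log N`
this gives the two estimates. Finally, `π(N) ≤ c N^σ ∫ |∑_{p ≤ N} r_p| ≤ c N^σ √π(N)` forces
`π(N) ≤ c² N^{2σ}`, which contradicts `π(N) ≫ N / log N` when `σ < 1/2`.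
-/

open Function
open Real (log)
open scoped Nat.Prime

theorem Function.Antiperiodic.intervalIntegral_add_two_mul_eq_zero {E : Type*}
    [NormedAddCommGroup E] [NormedSpace ℝ E] {f : ℝ → E} {T : ℝ} (hf : Antiperiodic f T)
    (hfi : ∀ a b, IntervalIntegrable f volume a b) (t : ℝ) :
    ∫ x in t..t + 2 * T, f x = 0 := by
  have hshift : ∫ x in t + T..t + 2 * T, f x = -∫ x in t..t + T, f x := by
    rw [← intervalIntegral.integral_neg, two_mul, ← add_assoc,
      ← intervalIntegral.integral_comp_add_right]
    simp only [hf _]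
  rw [← intervalIntegral.integral_add_adjacent_intervals (hfi t (t + T)) (hfi _ _), hshift,
    add_neg_cancel]

open ProbabilityTheory in
theorem sq_integral_abs_le_integral_sq {Ω : Type*} [MeasurableSpace Ω] {μ : Measure Ω}
    [IsProbabilityMeasure μ] {f : Ω → ℝ} (hf : MemLp f 2 μ) :
    (∫ x, |f x| ∂μ) ^ 2 ≤ ∫ x, f x ^ 2 ∂μ := by
  have := variance_nonneg |f| μ
  rw [variance_eq_sub hf.abs] at this
  simpa [sq_abs] using this

lemma le_sq_of_le_mul_sqrt {x a : ℝ} (hx : 0 ≤ x) (h : x ≤ a * √x) : x ≤ a ^ 2 := by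
  nlinarith [Real.sq_sqrt hx, Real.sqrt_nonneg x, sq_nonneg (a - √x)]

theorem not_eventually_mul_div_log_le_rpow {a C s : ℝ} (ha : 0 < a) (hs : s < 1) :
    ¬ ∀ᶠ N : ℕ in atTop, a * N / log N ≤ C * (N : ℝ) ^ s := by
  intro h
  set C' := |C| + 1
  have hC' : 0 < C' := by positivity
  have hlog : ∀ᶠ x : ℝ in atTop, log x ≤ a / (2 * C') * x ^ (1 - s) := by
    filter_upwards [(isLittleO_log_rpow_atTop (sub_pos.mpr hs)).bound
      (by positivity : 0 < a / (2 * C')), eventually_ge_atTop 1] with x hx hx1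
    simpa [abs_of_nonneg (Real.log_nonneg hx1),
      abs_of_nonneg (Real.rpow_nonneg (zero_le_one.trans hx1) _)] using hx
  obtain ⟨N, hN, hlogN, hN2⟩ :=
    (h.and ((tendsto_natCast_atTop_atTop.eventually hlog).and (eventually_ge_atTop 2))).exists
  have hN0 : (1 : ℝ) < N := by exact_mod_cast hN2
  have hlogpos : 0 < log N := Real.log_pos hN0
  have hsplit : (N : ℝ) ^ s * (N : ℝ) ^ (1 - s) = N := by
    rw [← Real.rpow_add (by linarith), add_sub_cancel, Real.rpow_one]
  rw [div_le_iff₀ hlogpos] at hN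
  have : a * N ≤ a / 2 * N := calc
    a * N ≤ C * N ^ s * log N := hN
    _ ≤ C' * N ^ s * log N := by gcongr; linarith [le_abs_self C]
    _ ≤ C' * N ^ s * (a / (2 * C') * N ^ (1 - s)) := by gcongr
    _ = a / 2 * (N ^ s * N ^ (1 - s)) := by field_simp
    _ = a / 2 * N := by rw [hsplit]
  nlinarith

lemma rad_eq_rad_zero (n : ℕ) (t : ℝ) : rad n t = rad 0 (2 ^ n * t) := by
  simp [rad]

lemma abs_rad (n : ℕ) (t : ℝ) : |rad n t| = 1 := by
  unfold rad; split <;> simp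

lemma measurable_rad (n : ℕ) : Measurable (rad n) :=
  Measurable.ite (measurableSet_lt (measurable_fract.comp (measurable_const_mul _))
    measurable_const) measurable_const measurable_const

lemma rad_zero_antiperiodic : Antiperiodic (rad 0) (1 / 2) := by
  intro t
  have h0 := Int.fract_nonneg t
  have h1 := Int.fract_lt_one t
  simp only [rad, pow_zero, one_mul]
  by_cases h : Int.fract t < 1 / 2
  · have : Int.fract (t + 1 / 2) = Int.fract t + 1 / 2 :=
      Int.fract_eq_iff.mpr ⟨by linarith, by linarith, ⌊t⌋, by rw [← Int.self_sub_fract]; ring⟩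
    rw [this, if_neg (by linarith), if_pos h]
  · have : Int.fract (t + 1 / 2) = Int.fract t - 1 / 2 :=
      Int.fract_eq_iff.mpr ⟨by linarith, by linarith, ⌊t⌋ + 1, by
        push_cast; rw [← Int.self_sub_fract]; ring⟩
    rw [this, if_pos (by linarith), if_neg h, neg_neg]

lemma rad_zero_periodic : Periodic (rad 0) 1 := by
  simpa using rad_zero_antiperiodic.periodic_two_mul

lemma rad_mul_self (n : ℕ) (t : ℝ) : rad n t * rad n t = 1 := by
  unfold rad; split <;> norm_num

lemma intervalIntegrable_rad_mul_rad (m n : ℕ) (a b : ℝ) :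
    IntervalIntegrable (fun t => rad m t * rad n t) volume a b := by
  refine (intervalIntegrable_const (c := (1 : ℝ))).mono_fun'
    ((measurable_rad m).mul (measurable_rad n)).aestronglyMeasurable (ae_of_all _ fun t => ?_)
  simp [abs_rad]

lemma antiperiodic_rad_mul_rad {m n : ℕ} (h : m < n) :
    Antiperiodic (fun t => rad m t * rad n t) (2 ^ (m + 1))⁻¹ := by
  intro t
  obtain ⟨k, rfl⟩ := Nat.exists_eq_add_of_lt h
  have hm : (2 : ℝ) ^ m * (t + (2 ^ (m + 1))⁻¹) = 2 ^ m * t + 1 / 2 := by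
    rw [pow_succ]; field_simp
  -- the shift `2 ^ k` of the argument of `rad 0` is written as a multiple of its period `1`
  have hn : (2 : ℝ) ^ (m + k + 1) * (t + (2 ^ (m + 1))⁻¹) =
      2 ^ (m + k + 1) * t + (2 ^ k : ℕ) * 1 := by
    field_simp; push_cast; ring
  simp only [rad_eq_rad_zero m, rad_eq_rad_zero (m + k + 1), hm, hn, rad_zero_antiperiodic _,
    rad_zero_periodic.nat_mul _ _, neg_mul]

lemma integral_rad_mul_rad_of_lt {m n : ℕ} (h : m < n) :
    ∫ t in 0..1, rad m t * rad n t = 0 := by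
  have hone : (1 : ℝ) = 0 + ((2 ^ m : ℕ) : ℤ) • (2 * (2 ^ (m + 1))⁻¹) := by
    rw [zero_add, zsmul_eq_mul, pow_succ]; push_cast; field_simp
  rw [hone, (antiperiodic_rad_mul_rad h).periodic_two_mul.intervalIntegral_add_zsmul_eq _ _
      (intervalIntegrable_rad_mul_rad m n),
    (antiperiodic_rad_mul_rad h).intervalIntegral_add_two_mul_eq_zero
      (intervalIntegrable_rad_mul_rad m n), smul_zero]

lemma integral_rad_mul_rad (m n : ℕ) :
    ∫ t in 0..1, rad m t * rad n t = if m = n then 1 else 0 := by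
  rcases lt_trichotomy m n with h | rfl | h
  · rw [integral_rad_mul_rad_of_lt h, if_neg h.ne]
  · simp [rad_mul_self]
  · simp_rw [mul_comm (rad m _)]
    rw [integral_rad_mul_rad_of_lt h, if_neg h.ne']

lemma integral_sum_rad_sq (S : Finset ℕ) :
    ∫ t in 0..1, (∑ p ∈ S, rad p t) ^ 2 = #S := by
  have hint (p : ℕ) : IntervalIntegrable (fun t => ∑ q ∈ S, rad p t * rad q t) volume 0 1 := by
    simpa only [Finset.sum_fn] using
      IntervalIntegrable.sum S fun q _ => intervalIntegrable_rad_mul_rad p q 0 1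
  simp_rw [sq, sum_mul_sum]
  rw [intervalIntegral.integral_finsetSum fun p _ => hint p]
  simp_rw [intervalIntegral.integral_finsetSum fun q _ => intervalIntegrable_rad_mul_rad _ q 0 1,
    integral_rad_mul_rad, sum_ite_eq]
  simp

lemma intervalIntegral_abs_sum_rad_le_sqrt_card (S : Finset ℕ) :
    ∫ t in 0..1, |∑ p ∈ S, rad p t| ≤ √(#S : ℝ) := by
  have : IsProbabilityMeasure (volume.restrict (Set.Ioc (0 : ℝ) 1)) := ⟨by simp⟩
  have hmeas : Measurable fun t => ∑ p ∈ S, rad p t :=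
    Finset.measurable_sum S fun p _ => measurable_rad p
  have hbdd : MemLp (fun t => ∑ p ∈ S, rad p t) 2 (volume.restrict (Set.Ioc 0 1)) := by
    refine MemLp.of_bound hmeas.aestronglyMeasurable #S (ae_of_all _ fun t => ?_)
    refine (norm_sum_le _ _).trans ?_
    simp [abs_rad]
  refine (le_abs_self _).trans (Real.abs_le_sqrt ?_)
  rw [← integral_sum_rad_sq, intervalIntegral.integral_of_le zero_le_one,
    intervalIntegral.integral_of_le zero_le_one]
  exact sq_integral_abs_le_integral_sq hbdd

lemma eventually_log_two_div_two_mul_div_log_le_primeCounting :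
    ∀ᶠ N : ℕ in atTop, log 2 / 2 * N / log N ≤ π N := by
  have hlog : ∀ᶠ x : ℝ in atTop, log x ≤ log 2 / 4 * x := by
    filter_upwards [Real.isLittleO_log_id_atTop.bound (by positivity : 0 < log 2 / 4),
      eventually_ge_atTop 1] with x hx hx1
    simpa [abs_of_nonneg (Real.log_nonneg hx1), abs_of_nonneg (zero_le_one.trans hx1)] using hx
  filter_upwards [(tendsto_natCast_atTop_atTop.comp (tendsto_add_atTop_nat 1)).eventually hlog,
    eventually_ge_atTop 1] with N hN hN1
  have hN1' : (1 : ℝ) ≤ N := by exact_mod_cast hN1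
  simp only [Function.comp_apply, Nat.cast_add, Nat.cast_one] at hN
  refine le_trans (div_le_div_of_nonneg_right ?_ (Real.log_natCast_nonneg N)) (Chebyshev.pi_ge N)
  nlinarith [(by positivity : 0 < log 2)]

lemma eventually_primeCounting_le_mul_div_log :
    ∀ᶠ N : ℕ in atTop, (π N : ℝ) ≤ (log 4 + 1) * N / log N := by
  filter_upwards [tendsto_natCast_atTop_atTop.eventually
    (Chebyshev.eventually_primeCounting_le one_pos)] with N hN
  simpa using hN

/-- Chebyshev's lower bound for `π(N)`, the Khinchin/`L²` upper bound for the `L¹`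
Rademacher average over primes, and the resulting lower bound `σ ≥ 1/2` for any
Sidon-type exponent for primes. -/
theorem primes_rad_half :
    (∃ c₁ > (0:ℝ), ∀ᶠ N : ℕ in atTop,
      c₁ * N / Real.log N ≤ ((Finset.range (N + 1)).filter Nat.Prime).card) ∧
    (∃ c₂ > (0:ℝ), ∀ᶠ N : ℕ in atTop,
      (∫ t in (0:ℝ)..1, |∑ p ∈ (Finset.range (N + 1)).filter Nat.Prime, rad p t|) ≤
        c₂ * Real.sqrt ((N : ℝ) / Real.log N)) ∧
    (∀ σ c : ℝ, 0 < σ → 0 < c →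
      (∀ N : ℕ, (((Finset.range (N + 1)).filter Nat.Prime).card : ℝ) ≤
        c * (N : ℝ) ^ σ *
          ∫ t in (0:ℝ)..1, |∑ p ∈ (Finset.range (N + 1)).filter Nat.Prime, rad p t|) →
      1 / 2 ≤ σ) := by
  simp only [← Nat.primesLE_eq_filter_range]
  have hL1 (N : ℕ) : ∫ t in (0:ℝ)..1, |∑ p ∈ Nat.primesLE N, rad p t| ≤ √(π N : ℝ) := by
    simpa [Nat.primesLE_card_eq_primeCounting] using
      intervalIntegral_abs_sum_rad_le_sqrt_card (Nat.primesLE N)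
  simp only [Nat.primesLE_card_eq_primeCounting]
  refine ⟨⟨log 2 / 2, by positivity, eventually_log_two_div_two_mul_div_log_le_primeCounting⟩,
    ⟨√(log 4 + 1), by positivity, ?_⟩, fun σ c _ hc h => ?_⟩
  · filter_upwards [eventually_primeCounting_le_mul_div_log] with N hN
    calc _ ≤ √(π N : ℝ) := hL1 N
      _ ≤ √((log 4 + 1) * (N / log N)) := by rw [← mul_div_assoc]; gcongr
      _ = √(log 4 + 1) * √(N / log N) := Real.sqrt_mul (by positivity) _
  by_contra! hσ
  refine not_eventually_mul_div_log_le_rpow (C := c ^ 2) (s := 2 * σ)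
    (by positivity : 0 < log 2 / 2) (by linarith) ?_
  filter_upwards [eventually_log_two_div_two_mul_div_log_le_primeCounting] with N hN
  have hπ : (π N : ℝ) ≤ (c * N ^ σ) ^ 2 :=
    le_sq_of_le_mul_sqrt (Nat.cast_nonneg _) ((h N).trans (by gcongr; exact hL1 N))
  calc _ ≤ (π N : ℝ) := hN
    _ ≤ (c * N ^ σ) ^ 2 := hπ
    _ = c ^ 2 * N ^ (2 * σ) := by
      rw [mul_pow, ← Real.rpow_mul_natCast (Nat.cast_nonneg _)]; push_cast; ring_nf
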